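/- Let r = e1 ⊗ e1* + e2 ⊗ e2* + e3 ⊗ e3* ∈ (H_0 ⊕ H_0*) ⊗ (H_0 ⊕ H_0*), where H_0 ⊕ H_0* carries the double-construction Frobenius product (for the solution r1 with a = 1). Then r + σ(r) is invariant: (L(u) ⊗ id − id ⊗ R(u))(r + σ(r)) = 0 for every u in the double, and r satisfies the associative Yang–Baxter equation there. -/
import Mathlib


open Finset

/-- Structure constants of the double `H₀ ⊕ H₀*` (basis `e₁,e₂,e₃,e₁*,e₂*,e₃*`,
indices `0,…,5`) for the Frobenius double construction with `α = 0`, `a₁₂ = 1`: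
nonzero products are `e₁ ∗ e₃ = e₂`, `e₂* ∗ e₂* = −e₃*`, `e₂* ∗ e₁ = e₃*`,
`e₃ ∗ e₂* = e₁* − e₂`, `e₂* ∗ e₃ = −e₂`. -/
def cDbl (i j k : Fin 6) : ℂ :=
  if i = 0 ∧ j = 2 ∧ k = 1 then 1
  else if i = 4 ∧ j = 4 ∧ k = 5 then -1
  else if i = 4 ∧ j = 0 ∧ k = 5 then 1
  else if i = 2 ∧ j = 4 ∧ k = 3 then 1
  else if i = 2 ∧ j = 4 ∧ k = 1 then -1
  else if i = 4 ∧ j = 2 ∧ k = 1 then -1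
  else 0

/-- The associative Yang–Baxter equation in components. -/
def AYBE6 (c : Fin 6 → Fin 6 → Fin 6 → ℂ) (r : Fin 6 → Fin 6 → ℂ) : Prop :=
  ∀ u v w : Fin 6,
    (∑ i, ∑ j, r i v * r j w * c i j u)
      + (∑ i, ∑ j, r u i * r v j * c i j w)
      - (∑ i, ∑ j, r i w * r u j * c i j v) = 0

/-- `r = e₁ ⊗ e₁* + e₂ ⊗ e₂* + e₃ ⊗ e₃*` as a coefficient matrix. -/
def rDbl : Fin 6 → Fin 6 → ℂ :=
  fun i j => if (i : ℕ) + 3 = (j : ℕ) then 1 else 0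

def cZaux (i j k : Fin 6) : ℤ :=
  if i = 0 ∧ j = 2 ∧ k = 1 then 1
  else if i = 4 ∧ j = 4 ∧ k = 5 then -1
  else if i = 4 ∧ j = 0 ∧ k = 5 then 1
  else if i = 2 ∧ j = 4 ∧ k = 3 then 1
  else if i = 2 ∧ j = 4 ∧ k = 1 then -1
  else if i = 4 ∧ j = 2 ∧ k = 1 then -1
  else 0

def rZaux : Fin 6 → Fin 6 → ℤ :=
  fun i j => if (i : ℕ) + 3 = (j : ℕ) then 1 else 0

lemma cDbl_eq_cast (i j k : Fin 6) : cDbl i j k = (cZaux i j k : ℂ) := by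
  unfold cDbl cZaux; split_ifs <;> norm_num

lemma rDbl_eq_cast (i j : Fin 6) : rDbl i j = (rZaux i j : ℂ) := by
  unfold rDbl rZaux; split_ifs <;> norm_num

lemma aybeZ : ∀ u v w : Fin 6,
    (∑ i, ∑ j, rZaux i v * rZaux j w * cZaux i j u)
      + (∑ i, ∑ j, rZaux u i * rZaux v j * cZaux i j w)
      - (∑ i, ∑ j, rZaux i w * rZaux u j * cZaux i j v) = 0 := by decide

set_option maxHeartbeats 2000000 in
/-- In the double `H₀ ⊕ H₀*`, `r + σ(r)` is invariant
(`(L(u) ⊗ id − id ⊗ R(u))(r + σ(r)) = 0` for every `u`), and `r` satisfies the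
associative Yang–Baxter equation. -/
theorem rDbl_invariant_and_AYBE :
    (∀ (x : Fin 6 → ℂ) (p q : Fin 6),
      (∑ i, (∑ m, x m * cDbl m i p) * (rDbl i q + rDbl q i))
        - (∑ j, (rDbl p j + rDbl j p) * (∑ m, x m * cDbl j m q)) = 0) ∧
    AYBE6 cDbl rDbl := by
  constructor
  · intro x p q
    fin_cases p <;> fin_cases q <;>
      · simp (config := { decide := true }) only [Fin.sum_univ_six, cDbl, rDbl,
          if_true, if_false]
        ring
  · intro u v w
    simp only [cDbl_eq_cast, rDbl_eq_cast]
    exact_mod_cast congrArg (Int.cast : ℤ → ℂ) (aybeZ u v w)
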